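/- If C ⊂ ℍ^d is a complete body of diameter δ, then for every boundary point p of C there exists a point p′ ∈ C with dist(p, p′) = δ. -/

import Mathlib

noncomputable section

namespace HypSpace

/-- Inverse hyperbolic cosine. -/
def arcosh (x : ℝ) : ℝ := Real.log (x + Real.sqrt (x ^ 2 - 1))

/-- The Minkowski bilinear form on `ℝ^{d+1}` (signature `(d,1)`, the last
coordinate being timelike). -/
def mink (d : ℕ) (x y : EuclideanSpace ℝ (Fin (d + 1))) : ℝ :=
  (∑ i : Fin d, x i.castSucc * y i.castSucc) - x (Fin.last d) * y (Fin.last d)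

/-- The hyperboloid model of `d`-dimensional hyperbolic space: the upper sheet
of the two-sheeted hyperboloid `mink x x = -1`. -/
def Pt (d : ℕ) : Type := {x : EuclideanSpace ℝ (Fin (d + 1)) // mink d x x = -1 ∧ 0 < x (Fin.last d)}

variable {d : ℕ}

/-- Hyperbolic distance between two points of `ℍ^d`. -/
def hdist (p q : Pt d) : ℝ := arcosh (-(mink d p.1 q.1))

/-- The geodesic segment between `a` and `b`, described metrically via betweenness
(hyperbolic space is uniquely geodesic). -/
def seg (a b : Pt d) : Set (Pt d) := {p | hdist a p + hdist p b = hdist a b}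

/-- A set is (geodesically) convex if it contains the segment between any two of its points. -/
def IsConvexSet (C : Set (Pt d)) : Prop := ∀ a ∈ C, ∀ b ∈ C, seg a b ⊆ C

/-- The convex hull: the smallest convex set containing `A`. -/
def chull (A : Set (Pt d)) : Set (Pt d) := ⋂₀ {C | IsConvexSet C ∧ A ⊆ C}

/-- The totally geodesic hyperplane with (spacelike) normal vector `v`. -/
def plane (v : EuclideanSpace ℝ (Fin (d + 1))) : Set (Pt d) := {p | mink d v p.1 = 0}

/-- A hyperplane of `ℍ^d`: the trace on the hyperboloid of a linear hyperplane
with spacelike unit normal. -/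
def IsHyperplane (H : Set (Pt d)) : Prop := ∃ v, mink d v v = 1 ∧ H = plane v

/-- Distance from a point to a set. -/
def distPS (p : Pt d) (S : Set (Pt d)) : ℝ := sInf (hdist p '' S)

/-- Distance between two sets. -/
def distSS (A B : Set (Pt d)) : ℝ := sInf {r | ∃ a ∈ A, ∃ b ∈ B, hdist a b = r}

/-- `h` is the orthogonal projection of `g` onto `H`: the point of `H`
realizing the distance from `g` to `H`.  For a hyperplane `H` with `a ∈ H`,
`IsProj b H a` also expresses that `H` is orthogonal to the segment `ab` at `a`. -/
def IsProj (g : Pt d) (H : Set (Pt d)) (h : Pt d) : Prop :=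
  h ∈ H ∧ ∀ k ∈ H, hdist g h ≤ hdist g k

/-- Two hyperplanes are ultraparallel if they are disjoint and not asymptotically
parallel (their distance is positive, i.e. they admit a common perpendicular). -/
def Ultraparallel (H J : Set (Pt d)) : Prop :=
  IsHyperplane H ∧ IsHyperplane J ∧ H ∩ J = ∅ ∧ 0 < distSS H J

/-- `p` is an interior point of `C`. -/
def IsIntr (C : Set (Pt d)) (p : Pt d) : Prop := ∃ ε > 0, ∀ q, hdist p q < ε → q ∈ C

/-- `p` is a boundary point of the (closed) set `C`. -/
def IsBdry (C : Set (Pt d)) (p : Pt d) : Prop := p ∈ C ∧ ¬ IsIntr C p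

/-- `C` is bounded. -/
def IsBddSet (C : Set (Pt d)) : Prop := ∃ R, ∀ a ∈ C, ∀ b ∈ C, hdist a b ≤ R

/-- `C` is closed. -/
def IsClosedSet (C : Set (Pt d)) : Prop :=
  ∀ p : Pt d, (∀ ε > 0, ∃ q ∈ C, hdist p q < ε) → p ∈ C

/-- A convex body: a compact (closed and bounded) convex set with nonempty interior. -/
def IsBody (C : Set (Pt d)) : Prop :=
  IsConvexSet C ∧ IsBddSet C ∧ IsClosedSet C ∧ ∃ p, IsIntr C p

/-- The hyperplane `H` supports `C`: it meets `C` but misses its interior. -/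
def Supports (H C : Set (Pt d)) : Prop :=
  IsHyperplane H ∧ (H ∩ C).Nonempty ∧ ∀ p, IsIntr C p → p ∉ H

/-- The width of `C` determined by `H`, as the maximum distance from `H`
to a point of `C`. -/
def width (H C : Set (Pt d)) : ℝ := sSup ((fun c => distPS c H) '' C)

/-- The width of `C` determined by `H`, as the distance from `H` to a farthest
supporting hyperplane of `C` ultraparallel to `H`. -/
def widthUP (H C : Set (Pt d)) : ℝ :=
  sSup {r | ∃ J, Supports J C ∧ Ultraparallel H J ∧ distSS H J = r}

/-- The thickness of `C`: the minimum width over supporting hyperplanes. -/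
def thickness (C : Set (Pt d)) : ℝ := sInf {r | ∃ H, Supports H C ∧ width H C = r}

/-- The diameter of `C`. -/
def diam (C : Set (Pt d)) : ℝ := sSup {r | ∃ a ∈ C, ∃ b ∈ C, hdist a b = r}

/-- A body of constant width `δ`. -/
def ConstWidth (W : Set (Pt d)) (δ : ℝ) : Prop :=
  IsBody W ∧ ∀ H, Supports H W → width H W = δ

/-- A complete set of diameter `δ`. -/
def CompleteSet (C : Set (Pt d)) (δ : ℝ) : Prop :=
  diam C = δ ∧ ∀ x, x ∉ C → diam (C ∪ {x}) > δ

/-- A body of constant diameter `δ`. -/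
def ConstDiam (C : Set (Pt d)) (δ : ℝ) : Prop :=
  diam C = δ ∧ ∀ p, IsBdry C p → ∃ p' ∈ C, hdist p p' = δ

/-!
Let `p` be a boundary point of the complete body `C`. Since `C` is compact, some point `p'` of `C`
is farthest from `p`, say at distance `M ≤ δ`. If `M < δ`, a point `x ∉ C` within `δ - M` of `p`
is within `δ` of every point of `C` by the triangle inequality, so adding it to `C` does not
increase the diameter, contradicting completeness. Hence `hdist p p' = δ`.

In the hyperboloid model, the triangle inequality comes from the Cauchy–Schwarz inequality for the
positive semidefinite form `w ↦ mink w w + (mink b w)²` attached to a point `b`, and compactness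
from the identity `cosh (hdist origin q) = q (Fin.last d)`, which bounds `C` in `ℝ^{d+1}`.
-/

lemma arcosh_eq_real_arcosh : arcosh = Real.arcosh := rfl

section Minkowski

lemma mink_comm (x y : EuclideanSpace ℝ (Fin (d + 1))) : mink d x y = mink d y x := by
  simp only [mink, mul_comm]

lemma mink_add_right (x y z : EuclideanSpace ℝ (Fin (d + 1))) :
    mink d x (y + z) = mink d x y + mink d x z := by
  simp only [mink, PiLp.add_apply, mul_add, Finset.sum_add_distrib]
  ring

lemma mink_smul_right (c : ℝ) (x y : EuclideanSpace ℝ (Fin (d + 1))) :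
    mink d x (c • y) = c * mink d x y := by
  simp only [mink, PiLp.smul_apply, smul_eq_mul, mul_sub, Finset.mul_sum, mul_left_comm]

lemma mink_add_left (x y z : EuclideanSpace ℝ (Fin (d + 1))) :
    mink d (x + y) z = mink d x z + mink d y z := by
  rw [mink_comm, mink_add_right, mink_comm z, mink_comm z]

lemma mink_smul_left (c : ℝ) (x y : EuclideanSpace ℝ (Fin (d + 1))) :
    mink d (c • x) y = c * mink d x y := by
  rw [mink_comm, mink_smul_right, mink_comm y]

lemma continuous_mink :
    Continuous fun q : EuclideanSpace ℝ (Fin (d + 1)) × EuclideanSpace ℝ (Fin (d + 1)) =>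
      mink d q.1 q.2 := by
  unfold mink
  fun_prop

lemma sum_spatial_sq_of_mink_self {x : EuclideanSpace ℝ (Fin (d + 1))} (hx : mink d x x = -1) :
    ∑ i : Fin d, x i.castSucc ^ 2 = x (Fin.last d) ^ 2 - 1 := by
  simp only [mink, ← sq] at hx
  linarith

lemma one_le_last_of_mink_self {x : EuclideanSpace ℝ (Fin (d + 1))} (hx : mink d x x = -1)
    (ht : 0 < x (Fin.last d)) : 1 ≤ x (Fin.last d) := by
  have := sum_spatial_sq_of_mink_self hx
  have : 0 ≤ ∑ i : Fin d, x i.castSucc ^ 2 := Finset.sum_nonneg fun i _ => sq_nonneg _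
  nlinarith

lemma Pt.one_le_last (p : Pt d) : 1 ≤ p.1 (Fin.last d) :=
  one_le_last_of_mink_self p.2.1 p.2.2

lemma spatial_inner_sq_le (p : Pt d) (w : EuclideanSpace ℝ (Fin (d + 1))) :
    (∑ i : Fin d, p.1 i.castSucc * w i.castSucc) ^ 2 ≤
      (p.1 (Fin.last d) ^ 2 - 1) * ∑ i : Fin d, w i.castSucc ^ 2 := by
  rw [← sum_spatial_sq_of_mink_self p.2.1]
  exact Finset.sum_mul_sq_le_sq_mul_sq _ _ _

/-- Reversed Cauchy–Schwarz inequality on the hyperboloid. -/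
lemma one_le_neg_mink (p q : Pt d) : 1 ≤ -mink d p.1 q.1 := by
  have hcs := spatial_inner_sq_le p q.1
  rw [sum_spatial_sq_of_mink_self q.2.1] at hcs
  set a := p.1 (Fin.last d)
  set b := q.1 (Fin.last d)
  set P := ∑ i : Fin d, p.1 i.castSucc * q.1 i.castSucc
  have hab : 0 ≤ a * b - 1 := by nlinarith [p.one_le_last, q.one_le_last]
  have hP : P ≤ a * b - 1 := (abs_le_of_sq_le_sq' (by nlinarith [sq_nonneg (a - b)]) hab).2
  simp only [mink]
  linarith

lemma mink_self_nonneg_of_mink_eq_zero (b : Pt d) {w : EuclideanSpace ℝ (Fin (d + 1))}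
    (hw : mink d b.1 w = 0) : 0 ≤ mink d w w := by
  have hcs := spatial_inner_sq_le b w
  have hX : 0 ≤ ∑ i : Fin d, w i.castSucc ^ 2 := Finset.sum_nonneg fun i _ => sq_nonneg _
  have hT := b.one_le_last
  simp only [mink] at hw ⊢
  simp only [← sq]
  rw [sub_eq_zero.mp hw] at hcs
  -- `hcs` now reads `(b₀ w₀)² ≤ (b₀² - 1) |w_s|²`, whence `b₀² (|w_s|² - w₀²) ≥ |w_s|²`
  have : 0 ≤ b.1 (Fin.last d) ^ 2 * (∑ i : Fin d, w i.castSucc ^ 2 - w (Fin.last d) ^ 2) := by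
    nlinarith
  exact nonneg_of_mul_nonneg_right this (by positivity)

/-- `mink w w + (mink b w)²` is `mink u u` for the component `u = w + (mink b w) • b` of `w`
orthogonal to `b`. -/
lemma mink_self_add_sq_nonneg (b : Pt d) (w : EuclideanSpace ℝ (Fin (d + 1))) :
    0 ≤ mink d w w + mink d b.1 w ^ 2 := by
  have horth : mink d b.1 (w + mink d b.1 w • b.1) = 0 := by
    rw [mink_add_right, mink_smul_right, b.2.1]
    ring
  have := mink_self_nonneg_of_mink_eq_zero b horth
  simp only [mink_add_left, mink_add_right, mink_smul_left, mink_smul_right, b.2.1,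
    mink_comm w b.1] at this
  linarith

lemma sq_mink_add_le (b : Pt d) (x y : EuclideanSpace ℝ (Fin (d + 1))) :
    (mink d x y + mink d b.1 x * mink d b.1 y) ^ 2 ≤
      (mink d x x + mink d b.1 x ^ 2) * (mink d y y + mink d b.1 y ^ 2) := by
  have hquad : ∀ t : ℝ, 0 ≤ (mink d y y + mink d b.1 y ^ 2) * (t * t) +
      2 * (mink d x y + mink d b.1 x * mink d b.1 y) * t + (mink d x x + mink d b.1 x ^ 2) := by
    intro t
    have := mink_self_add_sq_nonneg b (x + t • y)
    simp only [mink_add_left, mink_add_right, mink_smul_left, mink_smul_right,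
      mink_comm y x] at this
    linarith
  have := discrim_le_zero hquad
  rw [discrim] at this
  linarith

end Minkowski

section Distance

lemma cosh_hdist (p q : Pt d) : Real.cosh (hdist p q) = -mink d p.1 q.1 :=
  Real.cosh_arcosh (one_le_neg_mink p q)

lemma sinh_hdist (p q : Pt d) : Real.sinh (hdist p q) = √((-mink d p.1 q.1) ^ 2 - 1) :=
  Real.sinh_arcosh (one_le_neg_mink p q)

lemma hdist_nonneg (p q : Pt d) : 0 ≤ hdist p q :=
  Real.arcosh_nonneg (one_le_neg_mink p q)

lemma hdist_self (p : Pt d) : hdist p p = 0 := by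
  simp [hdist, p.2.1, arcosh_eq_real_arcosh, Real.arcosh_zero]

lemma hdist_comm (p q : Pt d) : hdist p q = hdist q p := by
  rw [hdist, hdist, mink_comm]

lemma hdist_le_of_neg_mink_le {p q : Pt d} {s : ℝ} (hs : 0 ≤ s)
    (h : -mink d p.1 q.1 ≤ Real.cosh s) : hdist p q ≤ s := by
  rw [← Real.arcosh_cosh hs, hdist, arcosh_eq_real_arcosh,
    Real.arcosh_le_arcosh (by linarith [one_le_neg_mink p q]) (Real.cosh_pos s)]
  exact h

lemma hdist_triangle (a b c : Pt d) : hdist a c ≤ hdist a b + hdist b c := by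
  have hcs := sq_mink_add_le b a.1 c.1
  rw [a.2.1, c.2.1, mink_comm b.1 a.1] at hcs
  have hab := one_le_neg_mink a b
  have hbc := one_le_neg_mink b c
  refine hdist_le_of_neg_mink_le (add_nonneg (hdist_nonneg a b) (hdist_nonneg b c)) ?_
  rw [Real.cosh_add, cosh_hdist, cosh_hdist, sinh_hdist, sinh_hdist,
    ← Real.sqrt_mul (by nlinarith)]
  have := neg_abs_le (mink d a.1 c.1 + mink d a.1 b.1 * mink d b.1 c.1)
  have := Real.abs_le_sqrt (x := mink d a.1 c.1 + mink d a.1 b.1 * mink d b.1 c.1)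
    (y := ((-mink d a.1 b.1) ^ 2 - 1) * ((-mink d b.1 c.1) ^ 2 - 1)) (by linarith)
  nlinarith

end Distance

section Topology

instance : TopologicalSpace (Pt d) := instTopologicalSpaceSubtype

lemma continuous_hdist : Continuous fun pq : Pt d × Pt d => hdist pq.1 pq.2 := by
  have hmink : Continuous fun pq : Pt d × Pt d => -mink d pq.1.1 pq.2.1 :=
    (continuous_mink.comp ((continuous_subtype_val.comp continuous_fst).prodMk
      (continuous_subtype_val.comp continuous_snd))).neg
  exact Real.continuousOn_arcosh.comp_continuous hmink fun pq => one_le_neg_mink pq.1 pq.2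

lemma continuous_hdist_left (p : Pt d) : Continuous (hdist p) :=
  continuous_hdist.comp (continuous_const.prodMk continuous_id)

lemma IsClosedSet.isClosed {C : Set (Pt d)} (hC : IsClosedSet C) : IsClosed C := by
  refine closure_subset_iff_isClosed.mp fun p hp => hC p fun ε hε => ?_
  have hnhds : {q | hdist p q < ε} ∈ nhds p :=
    (continuous_hdist_left p).continuousAt.preimage_mem_nhds
      (Iio_mem_nhds (by simpa [hdist_self] using hε))
  obtain ⟨q, hpq, hqC⟩ := mem_closure_iff_nhds.mp hp _ hnhds
  exact ⟨q, hqC, hpq⟩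

lemma isClosedEmbedding_val : Topology.IsClosedEmbedding fun p : Pt d => p.1 := by
  refine Topology.IsClosedEmbedding.subtypeVal ?_
  have hsheet : {x : EuclideanSpace ℝ (Fin (d + 1)) | mink d x x = -1 ∧ 0 < x (Fin.last d)} =
      {x | mink d x x = -1} ∩ {x | 1 ≤ x (Fin.last d)} := by
    ext x
    exact ⟨fun hx => ⟨hx.1, one_le_last_of_mink_self hx.1 hx.2⟩, fun hx => ⟨hx.1, zero_lt_one.trans_le hx.2⟩⟩
  rw [hsheet]
  exact (isClosed_eq (continuous_mink.comp (continuous_id.prodMk continuous_id)) continuous_const).inter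
    (isClosed_le continuous_const (PiLp.continuous_apply _ _ _))

def origin : Pt d :=
  ⟨EuclideanSpace.single (Fin.last d) 1, by simp [mink, Fin.castSucc_ne_last], by simp⟩

lemma cosh_hdist_origin (q : Pt d) : Real.cosh (hdist origin q) = q.1 (Fin.last d) := by
  rw [cosh_hdist]
  simp [origin, mink]

lemma norm_val_le (q : Pt d) : ‖q.1‖ ≤ 2 * q.1 (Fin.last d) := by
  have hsq : ‖q.1‖ ^ 2 = 2 * q.1 (Fin.last d) ^ 2 - 1 := by
    rw [EuclideanSpace.real_norm_sq_eq, Fin.sum_univ_castSucc, sum_spatial_sq_of_mink_self q.2.1]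
    ring
  nlinarith [norm_nonneg q.1, q.one_le_last]

lemma IsBddSet.isBounded_image_val {C : Set (Pt d)} (hC : IsBddSet C) :
    Bornology.IsBounded ((fun p : Pt d => p.1) '' C) := by
  rcases C.eq_empty_or_nonempty with rfl | ⟨p, hp⟩
  · simp
  obtain ⟨R, hR⟩ := hC
  refine isBounded_iff_forall_norm_le.mpr ⟨2 * Real.cosh (hdist origin p + R), ?_⟩
  rintro _ ⟨q, hq, rfl⟩
  have hoq : hdist origin q ≤ hdist origin p + R :=
    (hdist_triangle origin p q).trans (by gcongr; exact hR p hp q hq)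
  have hcosh : q.1 (Fin.last d) ≤ Real.cosh (hdist origin p + R) := by
    rw [← cosh_hdist_origin, Real.cosh_le_cosh, abs_of_nonneg (hdist_nonneg _ _),
      abs_of_nonneg ((hdist_nonneg _ _).trans hoq)]
    exact hoq
  linarith [norm_val_le q]

lemma IsClosedSet.isCompact {C : Set (Pt d)} (hC : IsClosedSet C) (hB : IsBddSet C) :
    IsCompact C := by
  rw [isClosedEmbedding_val.isInducing.isCompact_iff]
  exact Metric.isCompact_of_isClosed_isBounded (isClosedEmbedding_val.isClosedMap _ hC.isClosed)
    hB.isBounded_image_val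

end Topology

section Diameter

variable {C : Set (Pt d)}

lemma hdist_le_diam (hC : IsBddSet C) {a b : Pt d} (ha : a ∈ C) (hb : b ∈ C) :
    hdist a b ≤ diam C := by
  obtain ⟨R, hR⟩ := hC
  exact le_csSup ⟨R, by rintro _ ⟨a, ha, b, hb, rfl⟩; exact hR a ha b hb⟩ ⟨a, ha, b, hb, rfl⟩

lemma diam_le {r : ℝ} (hr : 0 ≤ r) (h : ∀ a ∈ C, ∀ b ∈ C, hdist a b ≤ r) : diam C ≤ r :=
  Real.sSup_le (by rintro _ ⟨a, ha, b, hb, rfl⟩; exact h a ha b hb) hr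

lemma diam_union_singleton_le {x : Pt d} {r : ℝ} (hr : 0 ≤ r)
    (hC : ∀ a ∈ C, ∀ b ∈ C, hdist a b ≤ r) (hx : ∀ a ∈ C, hdist a x ≤ r) :
    diam (C ∪ {x}) ≤ r := by
  refine diam_le hr ?_
  rintro a (ha | rfl) b (hb | rfl)
  · exact hC a ha b hb
  · exact hx a ha
  · rw [hdist_comm]
    exact hx b hb
  · rw [hdist_self]
    exact hr

lemma CompleteSet.le_of_isBdry {δ M : ℝ} (hcomp : CompleteSet C δ) (hB : IsBddSet C) {p : Pt d}
    (hp : IsBdry C p) (hM : ∀ q ∈ C, hdist p q ≤ M) : δ ≤ M := by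
  by_contra! hMδ
  have hnot : ∀ ε > 0, ∃ x, hdist p x < ε ∧ x ∉ C := by simpa [IsIntr] using hp.2
  obtain ⟨x, hpx, hxC⟩ := hnot (δ - M) (by linarith)
  have hδ : 0 ≤ δ := by linarith [hM p hp.1, hdist_self p]
  have hx : ∀ a ∈ C, hdist a x ≤ δ := fun a ha =>
    calc hdist a x ≤ hdist p a + hdist p x := hdist_comm p a ▸ hdist_triangle a p x
      _ ≤ δ := by linarith [hM a ha]
  have hC : ∀ a ∈ C, ∀ b ∈ C, hdist a b ≤ δ := fun a ha b hb =>
    hcomp.1 ▸ hdist_le_diam hB ha hb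
  exact (hcomp.2 x hxC).not_ge (diam_union_singleton_le hδ hC hx)

end Diameter

/-- Proposition 5: in a complete body of diameter `δ`, every
boundary point is an endpoint of a diameter. -/
theorem complete_boundary_has_diameter {d : ℕ} (C : Set (Pt d)) (δ : ℝ)
    (hC : IsBody C) (hcomp : CompleteSet C δ) :
    ∀ p, IsBdry C p → ∃ p' ∈ C, hdist p p' = δ := by
  obtain ⟨-, hB, hclosed, -⟩ := hC
  intro p hp
  obtain ⟨p', hp'C, hfar⟩ := (hclosed.isCompact hB).exists_isMaxOn ⟨p, hp.1⟩
    (continuous_hdist_left p).continuousOn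
  exact ⟨p', hp'C, le_antisymm (hcomp.1 ▸ hdist_le_diam hB hp.1 hp'C)
    (hcomp.le_of_isBdry hB hp fun q hq => hfar hq)⟩

end HypSpace
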